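/- arXiv:2110.12544 — 8 statements merged into one kernel-verified Lean document; each statement's English description precedes it below -/
import Mathlib

section
/- Let H₁ ∈ ℂ^{p×n}, F₁ ∈ ℂ^{n×n}, H₂ ∈ ℂ^{q×m}, F₂ ∈ ℂ^{m×m}, and W ∈ ℂ^{n×m} be complex matrices, and let z ∈ ℂ be nonzero such that zI − F₁ and z⁻¹I − F₂* are invertible. Then H₁(zI − F₁)⁻¹(−W + F₁WF₂*)(z⁻¹I − F₂*)⁻¹H₂* + H₁(zI − F₁)⁻¹ F₁WH₂* + H₁WF₂*(z⁻¹I − F₂*)⁻¹H₂* + H₁WH₂* = 0. -/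
open Matrix

/-- Lemma 6 of the paper, general "equivalence class" identity.
For matrices `H₁ ∈ ℂ^{p×n}`, `F₁ ∈ ℂ^{n×n}`, `H₂ ∈ ℂ^{q×m}`, `F₂ ∈ ℂ^{m×m}`,
`W ∈ ℂ^{n×m}` and nonzero `z ∈ ℂ` with `zI - F₁` and `z⁻¹I - F₂*` invertible,
`H₁(zI−F₁)⁻¹(−W+F₁WF₂*)(z⁻¹I−F₂*)⁻¹H₂* + H₁(zI−F₁)⁻¹F₁WH₂*
  + H₁WF₂*(z⁻¹I−F₂*)⁻¹H₂* + H₁WH₂* = 0`. -/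
theorem general_equivalence_class_identity
    {n m p q : ℕ}
    (H₁ : Matrix (Fin p) (Fin n) ℂ) (F₁ : Matrix (Fin n) (Fin n) ℂ)
    (H₂ : Matrix (Fin q) (Fin m) ℂ) (F₂ : Matrix (Fin m) (Fin m) ℂ)
    (W : Matrix (Fin n) (Fin m) ℂ)
    (z : ℂ) (hz : z ≠ 0)
    (h₁ : IsUnit (z • (1 : Matrix (Fin n) (Fin n) ℂ) - F₁))
    (h₂ : IsUnit (z⁻¹ • (1 : Matrix (Fin m) (Fin m) ℂ) - F₂ᴴ)) :
    H₁ * (z • (1 : Matrix (Fin n) (Fin n) ℂ) - F₁)⁻¹ * (-W + F₁ * W * F₂ᴴ) *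
        (z⁻¹ • (1 : Matrix (Fin m) (Fin m) ℂ) - F₂ᴴ)⁻¹ * H₂ᴴ
      + H₁ * (z • (1 : Matrix (Fin n) (Fin n) ℂ) - F₁)⁻¹ * (F₁ * W * H₂ᴴ)
      + H₁ * W * F₂ᴴ * (z⁻¹ • (1 : Matrix (Fin m) (Fin m) ℂ) - F₂ᴴ)⁻¹ * H₂ᴴ
      + H₁ * W * H₂ᴴ = 0 := by
  set A : Matrix (Fin n) (Fin n) ℂ := z • (1 : Matrix (Fin n) (Fin n) ℂ) - F₁ with hA
  set B : Matrix (Fin m) (Fin m) ℂ := z⁻¹ • (1 : Matrix (Fin m) (Fin m) ℂ) - F₂ᴴ with hB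
  have hAd := (Matrix.isUnit_iff_isUnit_det A).mp h₁
  have hBd := (Matrix.isUnit_iff_isUnit_det B).mp h₂
  have hA1 : A * A⁻¹ = 1 := Matrix.mul_nonsing_inv A hAd
  have hA2 : A⁻¹ * A = 1 := Matrix.nonsing_inv_mul A hAd
  have hB1 : B * B⁻¹ = 1 := Matrix.mul_nonsing_inv B hBd
  have hB2 : B⁻¹ * B = 1 := Matrix.nonsing_inv_mul B hBd
  set T : Matrix (Fin n) (Fin m) ℂ :=
    A⁻¹ * (-W + F₁ * W * F₂ᴴ) * B⁻¹ + A⁻¹ * (F₁ * W) + W * F₂ᴴ * B⁻¹ + W with hT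
  have hAc : ∀ (X : Matrix (Fin n) (Fin m) ℂ), A * (A⁻¹ * X) = X := fun X => by
    rw [← Matrix.mul_assoc, hA1, Matrix.one_mul]
  have hmid : A * T * B = 0 := by
    have expand : A * T * B
        = (-W + F₁ * W * F₂ᴴ) + F₁ * W * B + A * (W * F₂ᴴ) + A * W * B := by
      rw [hT]
      simp only [Matrix.mul_add, Matrix.add_mul, Matrix.mul_assoc, hB2,
        Matrix.mul_one, hAc]
    rw [expand, hA, hB]
    simp only [Matrix.sub_mul, Matrix.mul_sub, Matrix.smul_mul, Matrix.mul_smul,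
      Matrix.one_mul, Matrix.mul_one, smul_smul, inv_mul_cancel₀ hz, one_smul,
      smul_sub, Matrix.mul_assoc, neg_smul, neg_sub]
    abel
  have hT0 : T = 0 := by
    calc T = A⁻¹ * (A * T * B) * B⁻¹ := by
          rw [Matrix.mul_assoc A T B, ← Matrix.mul_assoc A⁻¹ A (T * B), hA2,
            Matrix.one_mul, Matrix.mul_assoc T B B⁻¹, hB1, Matrix.mul_one]
      _ = 0 := by rw [hmid]; simp
  have hfin : H₁ * T * H₂ᴴ = 0 := by rw [hT0]; simp
  rw [hT] at hfin
  simp only [Matrix.mul_add, Matrix.add_mul, Matrix.mul_assoc] at hfin ⊢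
  exact hfin
end

section
/- Let H ∈ ℂ^{p×n} and F ∈ ℂ^{n×n} be complex matrices, let P ∈ ℂ^{n×n} be Hermitian, and let z ∈ ℂ be nonzero such that zI − F and z⁻¹I − F* are invertible. Then H(zI − F)⁻¹(−P + FPF*)(z⁻¹I − F*)⁻¹H* + H(zI − F)⁻¹FPH* + HPF*(z⁻¹I − F*)⁻¹H* + HPH* = 0. -/
open Matrix

/-- Lemma 5 of the paper. For `H ∈ ℂ^{p×n}`, `F ∈ ℂ^{n×n}`,
Hermitian `P ∈ ℂ^{n×n}` and nonzero `z ∈ ℂ` with `zI - F` and `z⁻¹I - F*` invertible,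
`H(zI−F)⁻¹(−P+FPF*)(z⁻¹I−F*)⁻¹H* + H(zI−F)⁻¹FPH* + HPF*(z⁻¹I−F*)⁻¹H* + HPH* = 0`. -/
theorem equivalence_class_identity_two
    {n p : ℕ}
    (H : Matrix (Fin p) (Fin n) ℂ) (F : Matrix (Fin n) (Fin n) ℂ)
    (P : Matrix (Fin n) (Fin n) ℂ) (hP : P.IsHermitian)
    (z : ℂ) (hz : z ≠ 0)
    (h₁ : IsUnit (z • (1 : Matrix (Fin n) (Fin n) ℂ) - F))
    (h₂ : IsUnit (z⁻¹ • (1 : Matrix (Fin n) (Fin n) ℂ) - Fᴴ)) :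
    H * (z • (1 : Matrix (Fin n) (Fin n) ℂ) - F)⁻¹ * (-P + F * P * Fᴴ) *
        (z⁻¹ • (1 : Matrix (Fin n) (Fin n) ℂ) - Fᴴ)⁻¹ * Hᴴ
      + H * (z • (1 : Matrix (Fin n) (Fin n) ℂ) - F)⁻¹ * (F * P * Hᴴ)
      + H * P * Fᴴ * (z⁻¹ • (1 : Matrix (Fin n) (Fin n) ℂ) - Fᴴ)⁻¹ * Hᴴ
      + H * P * Hᴴ = 0 := by
  set A : Matrix (Fin n) (Fin n) ℂ := z • (1 : Matrix (Fin n) (Fin n) ℂ) - F with hA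
  set B : Matrix (Fin n) (Fin n) ℂ := z⁻¹ • (1 : Matrix (Fin n) (Fin n) ℂ) - Fᴴ with hB
  have hAdet := (Matrix.isUnit_iff_isUnit_det A).mp h₁
  have hBdet := (Matrix.isUnit_iff_isUnit_det B).mp h₂
  have hA1 : A⁻¹ * A = 1 := Matrix.nonsing_inv_mul A hAdet
  have hA2 : A * A⁻¹ = 1 := Matrix.mul_nonsing_inv A hAdet
  have hB1 : B * B⁻¹ = 1 := Matrix.mul_nonsing_inv B hBdet
  have hB2 : B⁻¹ * B = 1 := Matrix.nonsing_inv_mul B hBdet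
  set M : Matrix (Fin n) (Fin n) ℂ :=
    A⁻¹ * (-P + F * P * Fᴴ) * B⁻¹ + A⁻¹ * (F * P) + P * Fᴴ * B⁻¹ + P with hM
  have hzero : A * M * B = 0 := by
    have expand : A * M * B
        = (A * A⁻¹) * (-P + F * P * Fᴴ) * (B⁻¹ * B) + (A * A⁻¹) * (F * P) * B
          + A * (P * Fᴴ) * (B⁻¹ * B) + A * P * B := by
      rw [hM]
      noncomm_ring
    rw [expand, hA2, hB2, hA, hB]
    simp only [Matrix.one_mul, Matrix.mul_one, Matrix.sub_mul, Matrix.mul_sub,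
      Matrix.smul_mul, Matrix.mul_smul, Matrix.one_mul, Matrix.mul_one, smul_smul,
      inv_mul_cancel₀ hz, mul_inv_cancel₀ hz, one_smul, Matrix.mul_assoc]
    match_scalars <;> field_simp <;> ring
  have hM0 : M = 0 := by
    calc M = (A⁻¹ * A) * M * (B * B⁻¹) := by rw [hA1, hB1]; simp
    _ = A⁻¹ * (A * M * B) * B⁻¹ := by noncomm_ring
    _ = 0 := by rw [hzero]; simp
  have key : H * M * Hᴴ = 0 := by rw [hM0, Matrix.mul_zero, Matrix.zero_mul]
  calc H * A⁻¹ * (-P + F * P * Fᴴ) * B⁻¹ * Hᴴ + H * A⁻¹ * (F * P * Hᴴ)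
        + H * P * Fᴴ * B⁻¹ * Hᴴ + H * P * Hᴴ
      = H * M * Hᴴ := by
        rw [hM]
        simp only [Matrix.mul_add, Matrix.add_mul, Matrix.neg_mul, Matrix.mul_neg,
          Matrix.mul_assoc]
    _ = 0 := key
end

section
/- Let A ∈ ℂ^{n×n}, B ∈ ℂ^{n×m}, C ∈ ℂ^{p×n} be complex matrices. Let P₁ ∈ ℂ^{n×n} be Hermitian, set Σ₁ = I + B*P₁B, assume Σ₁ is invertible, set K₁ = Σ₁⁻¹B*P₁A, and assume the Riccati equation C*C − P₁ + A*P₁A − A*P₁BΣ₁⁻¹B*P₁A = 0 holds. Then for every nonzero z ∈ ℂ such that zI − A and z⁻¹I − A* are invertible, the spectral factorization identity holds: I + B*(z⁻¹I − A*)⁻¹C* · C(zI − A)⁻¹B = (I + B*(z⁻¹I − A*)⁻¹K₁*) Σ₁ (I + K₁(zI − A)⁻¹B). -/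
open Matrix

set_option maxHeartbeats 1000000

/-- pointwise form of the first canonical factorization of Lemma 1.
With `Σ₁ = I + B*P₁B` invertible, `K₁ = Σ₁⁻¹B*P₁A`, and the Riccati equation
`C*C − P₁ + A*P₁A − A*P₁BΣ₁⁻¹B*P₁A = 0`, for every nonzero `z` with `zI − A` and
`z⁻¹I − A*` invertible,
`I + B*(z⁻¹I−A*)⁻¹C* · C(zI−A)⁻¹B = (I + B*(z⁻¹I−A*)⁻¹K₁*) Σ₁ (I + K₁(zI−A)⁻¹B)`. -/
theorem spectral_factorization_one
    {n m p : ℕ}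
    (A : Matrix (Fin n) (Fin n) ℂ) (B : Matrix (Fin n) (Fin m) ℂ)
    (C : Matrix (Fin p) (Fin n) ℂ)
    (P₁ : Matrix (Fin n) (Fin n) ℂ) (hP₁ : P₁.IsHermitian)
    (Sg₁ : Matrix (Fin m) (Fin m) ℂ) (hSg₁ : Sg₁ = 1 + Bᴴ * P₁ * B)
    (hSg₁inv : IsUnit Sg₁)
    (K₁ : Matrix (Fin m) (Fin n) ℂ) (hK₁ : K₁ = Sg₁⁻¹ * Bᴴ * P₁ * A)
    (hRiccati : Cᴴ * C - P₁ + Aᴴ * P₁ * A - Aᴴ * P₁ * B * Sg₁⁻¹ * Bᴴ * P₁ * A = 0) :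
    ∀ z : ℂ, z ≠ 0 →
      IsUnit (z • (1 : Matrix (Fin n) (Fin n) ℂ) - A) →
      IsUnit (z⁻¹ • (1 : Matrix (Fin n) (Fin n) ℂ) - Aᴴ) →
      (1 : Matrix (Fin m) (Fin m) ℂ)
          + Bᴴ * (z⁻¹ • (1 : Matrix (Fin n) (Fin n) ℂ) - Aᴴ)⁻¹ * Cᴴ *
              (C * (z • (1 : Matrix (Fin n) (Fin n) ℂ) - A)⁻¹ * B)
        = ((1 : Matrix (Fin m) (Fin m) ℂ)
              + Bᴴ * (z⁻¹ • (1 : Matrix (Fin n) (Fin n) ℂ) - Aᴴ)⁻¹ * K₁ᴴ) * Sg₁ *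
            ((1 : Matrix (Fin m) (Fin m) ℂ)
              + K₁ * (z • (1 : Matrix (Fin n) (Fin n) ℂ) - A)⁻¹ * B) := by
  intro z hz hMu hNu
  set M : Matrix (Fin n) (Fin n) ℂ := z • (1 : Matrix (Fin n) (Fin n) ℂ) - A with hMdef
  set N : Matrix (Fin n) (Fin n) ℂ := z⁻¹ • (1 : Matrix (Fin n) (Fin n) ℂ) - Aᴴ with hNdef
  have hM1 : M⁻¹ * M = 1 := Matrix.nonsing_inv_mul M ((Matrix.isUnit_iff_isUnit_det M).mp hMu)
  have hM2 : M * M⁻¹ = 1 := Matrix.mul_nonsing_inv M ((Matrix.isUnit_iff_isUnit_det M).mp hMu)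
  have hN1 : N⁻¹ * N = 1 := Matrix.nonsing_inv_mul N ((Matrix.isUnit_iff_isUnit_det N).mp hNu)
  have hN2 : N * N⁻¹ = 1 := Matrix.mul_nonsing_inv N ((Matrix.isUnit_iff_isUnit_det N).mp hNu)
  have hS1 : Sg₁⁻¹ * Sg₁ = 1 :=
    Matrix.nonsing_inv_mul Sg₁ ((Matrix.isUnit_iff_isUnit_det Sg₁).mp hSg₁inv)
  have hS2 : Sg₁ * Sg₁⁻¹ = 1 :=
    Matrix.mul_nonsing_inv Sg₁ ((Matrix.isUnit_iff_isUnit_det Sg₁).mp hSg₁inv)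
  -- Σ is Hermitian
  have hSH : Sg₁ᴴ = Sg₁ := by
    rw [hSg₁]
    simp [Matrix.conjTranspose_add, Matrix.conjTranspose_mul, hP₁.eq, Matrix.mul_assoc]
  have hK₁H : K₁ᴴ = Aᴴ * (P₁ * (B * Sg₁⁻¹)) := by
    rw [hK₁]
    simp [Matrix.conjTranspose_mul, hP₁.eq, Matrix.conjTranspose_nonsing_inv, hSH,
      Matrix.mul_assoc]
  -- key algebraic identity
  have hTPS : (z⁻¹ • (1 : Matrix (Fin n) (Fin n) ℂ)) * P₁ * (z • (1 : Matrix (Fin n) (Fin n) ℂ)) = P₁ := by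
    simp [Matrix.smul_mul, Matrix.mul_smul, smul_smul, inv_mul_cancel₀ hz, mul_inv_cancel₀ hz]
  have hkey : N * P₁ * M + N * P₁ * A + Aᴴ * P₁ * M = P₁ - Aᴴ * P₁ * A := by
    rw [hMdef, hNdef]
    simp only [Matrix.sub_mul, Matrix.mul_sub]
    rw [hTPS]
    abel
  have h1 : Cᴴ * C = P₁ - Aᴴ * P₁ * A + Aᴴ * P₁ * B * Sg₁⁻¹ * Bᴴ * P₁ * A := by
    apply eq_of_sub_eq_zero
    rw [← hRiccati]
    abel
  have hCC : Cᴴ * C = N * P₁ * M + N * P₁ * A + Aᴴ * P₁ * M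
      + Aᴴ * P₁ * B * Sg₁⁻¹ * Bᴴ * P₁ * A := by
    rw [h1, hkey]
  -- cancellation helpers
  have hNc : ∀ X : Matrix (Fin n) (Fin m) ℂ, N⁻¹ * (N * X) = X := fun X => by
    rw [← Matrix.mul_assoc, hN1, Matrix.one_mul]
  have hMc : ∀ X : Matrix (Fin n) (Fin m) ℂ, M * (M⁻¹ * X) = X := fun X => by
    rw [← Matrix.mul_assoc, hM2, Matrix.one_mul]
  have hSc : ∀ X : Matrix (Fin m) (Fin m) ℂ, Sg₁ * (Sg₁⁻¹ * X) = X := fun X => by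
    rw [← Matrix.mul_assoc, hS2, Matrix.one_mul]
  have hSc' : ∀ X : Matrix (Fin m) (Fin m) ℂ, Sg₁⁻¹ * (Sg₁ * X) = X := fun X => by
    rw [← Matrix.mul_assoc, hS1, Matrix.one_mul]
  have hScn : ∀ X : Matrix (Fin m) (Fin n) ℂ, Sg₁ * (Sg₁⁻¹ * X) = X := fun X => by
    rw [← Matrix.mul_assoc, hS2, Matrix.one_mul]
  have hScn' : ∀ X : Matrix (Fin m) (Fin n) ℂ, Sg₁⁻¹ * (Sg₁ * X) = X := fun X => by
    rw [← Matrix.mul_assoc, hS1, Matrix.one_mul]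
  have e : Bᴴ * N⁻¹ * Cᴴ * (C * M⁻¹ * B) = Bᴴ * N⁻¹ * (Cᴴ * C) * (M⁻¹ * B) := by
    simp only [Matrix.mul_assoc]
  rw [e, hCC, hK₁H, hK₁]
  simp only [Matrix.add_mul, Matrix.mul_add, Matrix.one_mul, Matrix.mul_one, Matrix.mul_assoc,
    hNc, hMc, hSc, hSc', hScn, hScn', hS1, hS2]
  rw [hSg₁]
  simp only [Matrix.mul_assoc]
  abel
end

section
/- Let A ∈ ℂ^{n×n}, B ∈ ℂ^{n×m}, C ∈ ℂ^{p×n} be complex matrices. Let P₂ ∈ ℂ^{n×n} be Hermitian, set Σ₂ = I + CP₂C*, assume Σ₂ is invertible, set K₂ = AP₂C*Σ₂⁻¹, and assume the Riccati equation BB* − P₂ + AP₂A* − AP₂C*Σ₂⁻¹CP₂A* = 0 holds. Then for every nonzero z ∈ ℂ such that zI − A and z⁻¹I − A* are invertible, the spectral factorization identity holds: I + C(zI − A)⁻¹B · B*(z⁻¹I − A*)⁻¹C* = (I + C(zI − A)⁻¹K₂) Σ₂ (I + K₂*(z⁻¹I − A*)⁻¹C*). -/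
open Matrix

/-- pointwise form of the second canonical factorization of Lemma 1.
With `Σ₂ = I + CP₂C*` invertible, `K₂ = AP₂C*Σ₂⁻¹`, and the Riccati equation
`BB* − P₂ + AP₂A* − AP₂C*Σ₂⁻¹CP₂A* = 0`, for every nonzero `z` with `zI − A` and
`z⁻¹I − A*` invertible,
`I + C(zI−A)⁻¹B · B*(z⁻¹I−A*)⁻¹C* = (I + C(zI−A)⁻¹K₂) Σ₂ (I + K₂*(z⁻¹I−A*)⁻¹C*)`. -/
theorem spectral_factorization_two
    {n m p : ℕ}
    (A : Matrix (Fin n) (Fin n) ℂ) (B : Matrix (Fin n) (Fin m) ℂ)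
    (C : Matrix (Fin p) (Fin n) ℂ)
    (P₂ : Matrix (Fin n) (Fin n) ℂ) (hP₂ : P₂.IsHermitian)
    (Sg₂ : Matrix (Fin p) (Fin p) ℂ) (hSg₂ : Sg₂ = 1 + C * P₂ * Cᴴ)
    (hSg₂inv : IsUnit Sg₂)
    (K₂ : Matrix (Fin n) (Fin p) ℂ) (hK₂ : K₂ = A * P₂ * Cᴴ * Sg₂⁻¹)
    (hRiccati : B * Bᴴ - P₂ + A * P₂ * Aᴴ - A * P₂ * Cᴴ * Sg₂⁻¹ * C * P₂ * Aᴴ = 0) :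
    ∀ z : ℂ, z ≠ 0 →
      IsUnit (z • (1 : Matrix (Fin n) (Fin n) ℂ) - A) →
      IsUnit (z⁻¹ • (1 : Matrix (Fin n) (Fin n) ℂ) - Aᴴ) →
      (1 : Matrix (Fin p) (Fin p) ℂ)
          + C * (z • (1 : Matrix (Fin n) (Fin n) ℂ) - A)⁻¹ * B *
              (Bᴴ * (z⁻¹ • (1 : Matrix (Fin n) (Fin n) ℂ) - Aᴴ)⁻¹ * Cᴴ)
        = ((1 : Matrix (Fin p) (Fin p) ℂ)
              + C * (z • (1 : Matrix (Fin n) (Fin n) ℂ) - A)⁻¹ * K₂) * Sg₂ *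
            ((1 : Matrix (Fin p) (Fin p) ℂ)
              + K₂ᴴ * (z⁻¹ • (1 : Matrix (Fin n) (Fin n) ℂ) - Aᴴ)⁻¹ * Cᴴ) := by
  intro z hz hFu hGu
  set F : Matrix (Fin n) (Fin n) ℂ := z • 1 - A with hF
  set G : Matrix (Fin n) (Fin n) ℂ := z⁻¹ • 1 - Aᴴ with hG
  have hFdet := (Matrix.isUnit_iff_isUnit_det F).mp hFu
  have hGdet := (Matrix.isUnit_iff_isUnit_det G).mp hGu
  have hFinv : F⁻¹ * F = 1 := Matrix.nonsing_inv_mul F hFdet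
  have hFinv' : F * F⁻¹ = 1 := Matrix.mul_nonsing_inv F hFdet
  have hGinv : G⁻¹ * G = 1 := Matrix.nonsing_inv_mul G hGdet
  have hGinv' : G * G⁻¹ = 1 := Matrix.mul_nonsing_inv G hGdet
  have hSdet := (Matrix.isUnit_iff_isUnit_det Sg₂).mp hSg₂inv
  have hSinv : Sg₂⁻¹ * Sg₂ = 1 := Matrix.nonsing_inv_mul Sg₂ hSdet
  have hSinv' : Sg₂ * Sg₂⁻¹ = 1 := Matrix.mul_nonsing_inv Sg₂ hSdet
  have hSH : Sg₂.IsHermitian := by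
    rw [hSg₂]
    unfold Matrix.IsHermitian
    simp [Matrix.conjTranspose_add, Matrix.conjTranspose_mul, hP₂.eq, Matrix.mul_assoc]
  -- K₂ * Sg₂ = A * P₂ * Cᴴ
  have hKS : K₂ * Sg₂ = A * P₂ * Cᴴ := by
    rw [hK₂, Matrix.mul_assoc, hSinv, Matrix.mul_one]
  -- K₂ᴴ = Sg₂⁻¹ * (C * (P₂ * Aᴴ))
  have hKH : K₂ᴴ = Sg₂⁻¹ * (C * (P₂ * Aᴴ)) := by
    rw [hK₂]
    simp only [Matrix.conjTranspose_mul, Matrix.conjTranspose_nonsing_inv, hSH.eq, hP₂.eq,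
      Matrix.conjTranspose_conjTranspose, Matrix.mul_assoc]
  have hSKH : Sg₂ * K₂ᴴ = C * (P₂ * Aᴴ) := by
    rw [hKH, ← Matrix.mul_assoc, hSinv', Matrix.one_mul]
  -- the Riccati equation rearranged
  have hBB : B * Bᴴ = P₂ - A * P₂ * Aᴴ + A * P₂ * Cᴴ * Sg₂⁻¹ * C * P₂ * Aᴴ := by
    rw [← sub_eq_zero, ← hRiccati]; abel
  -- key polynomial identity
  have hkey : P₂ - A * P₂ * Aᴴ = F * (P₂ * G) + A * (P₂ * G) + F * (P₂ * Aᴴ) := by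
    have hzz : z • (z⁻¹ • P₂) = P₂ := by
      rw [smul_smul, mul_inv_cancel₀ hz, one_smul]
    have hzz' : z⁻¹ • (z • P₂) = P₂ := by
      rw [smul_smul, inv_mul_cancel₀ hz, one_smul]
    simp only [hF, hG, Matrix.sub_mul, Matrix.mul_sub, Matrix.smul_mul, Matrix.mul_smul,
      Matrix.one_mul, Matrix.mul_one, smul_sub, Matrix.mul_assoc, hzz, hzz']
    abel
  -- cancellation helpers
  have hFc : ∀ (q : ℕ) (X : Matrix (Fin n) (Fin q) ℂ), F⁻¹ * (F * X) = X := fun q X => by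
    rw [← Matrix.mul_assoc, hFinv, Matrix.one_mul]
  have hGc : G * (G⁻¹ * Cᴴ) = Cᴴ := by
    rw [← Matrix.mul_assoc, hGinv', Matrix.one_mul]
  -- compute the left side middle term
  have hL : C * F⁻¹ * B * (Bᴴ * G⁻¹ * Cᴴ)
      = C * (F⁻¹ * ((P₂ - A * P₂ * Aᴴ) * (G⁻¹ * Cᴴ)))
        + C * (F⁻¹ * (A * (P₂ * (Cᴴ * (Sg₂⁻¹ * (C * (P₂ * (Aᴴ * (G⁻¹ * Cᴴ)))))))))
        := by
    have : C * F⁻¹ * B * (Bᴴ * G⁻¹ * Cᴴ) = C * (F⁻¹ * ((B * Bᴴ) * (G⁻¹ * Cᴴ))) := by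
      simp only [Matrix.mul_assoc]
    rw [this, hBB]
    simp only [Matrix.add_mul, Matrix.mul_add, Matrix.mul_assoc]
  -- compute the right side
  have hR : ((1 : Matrix (Fin p) (Fin p) ℂ) + C * F⁻¹ * K₂) * Sg₂ *
        ((1 : Matrix (Fin p) (Fin p) ℂ) + K₂ᴴ * G⁻¹ * Cᴴ)
      = Sg₂ + C * (P₂ * (Aᴴ * (G⁻¹ * Cᴴ)))
        + C * (F⁻¹ * (A * (P₂ * Cᴴ)))
        + C * (F⁻¹ * (A * (P₂ * (Cᴴ * (Sg₂⁻¹ * (C * (P₂ * (Aᴴ * (G⁻¹ * Cᴴ))))))))) := by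
    have e1 : ((1 : Matrix (Fin p) (Fin p) ℂ) + C * F⁻¹ * K₂) * Sg₂
        = Sg₂ + C * F⁻¹ * (K₂ * Sg₂) := by
      simp only [Matrix.add_mul, Matrix.one_mul, Matrix.mul_assoc]
    rw [e1, hKS, Matrix.mul_add, Matrix.add_mul, Matrix.add_mul, Matrix.mul_one, Matrix.mul_one]
    have e2 : Sg₂ * (K₂ᴴ * G⁻¹ * Cᴴ) = C * (P₂ * (Aᴴ * (G⁻¹ * Cᴴ))) := by
      rw [show K₂ᴴ * G⁻¹ * Cᴴ = K₂ᴴ * (G⁻¹ * Cᴴ) from by rw [Matrix.mul_assoc],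
        ← Matrix.mul_assoc, hSKH]
      simp only [Matrix.mul_assoc]
    have e3 : C * F⁻¹ * (A * P₂ * Cᴴ) * (K₂ᴴ * G⁻¹ * Cᴴ)
        = C * (F⁻¹ * (A * (P₂ * (Cᴴ * (Sg₂⁻¹ * (C * (P₂ * (Aᴴ * (G⁻¹ * Cᴴ))))))))) := by
      rw [hKH]
      simp only [Matrix.mul_assoc]
    rw [e2, e3]
    have e4 : C * F⁻¹ * (A * P₂ * Cᴴ) = C * (F⁻¹ * (A * (P₂ * Cᴴ))) := by
      simp only [Matrix.mul_assoc]
    rw [e4]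
    abel
  rw [hL, hR, hSg₂]
  -- remaining: 1 + C (F⁻¹ ((P₂ - A P₂ Aᴴ)(G⁻¹ Cᴴ))) = 1 + C P₂ Cᴴ + C P₂ Aᴴ G⁻¹ Cᴴ + C F⁻¹ A P₂ Cᴴ
  have main : C * (F⁻¹ * ((P₂ - A * P₂ * Aᴴ) * (G⁻¹ * Cᴴ)))
      = C * P₂ * Cᴴ + C * (P₂ * (Aᴴ * (G⁻¹ * Cᴴ))) + C * (F⁻¹ * (A * (P₂ * Cᴴ))) := by
    have t1 : F * (P₂ * G) * (G⁻¹ * Cᴴ) = F * (P₂ * Cᴴ) := by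
      simp only [Matrix.mul_assoc, hGc]
    have t2 : A * (P₂ * G) * (G⁻¹ * Cᴴ) = A * (P₂ * Cᴴ) := by
      simp only [Matrix.mul_assoc, hGc]
    have t3 : F * (P₂ * Aᴴ) * (G⁻¹ * Cᴴ) = F * (P₂ * (Aᴴ * (G⁻¹ * Cᴴ))) := by
      simp only [Matrix.mul_assoc]
    rw [hkey, Matrix.add_mul, Matrix.add_mul, t1, t2, t3]
    simp only [Matrix.mul_add]
    rw [hFc, hFc, ← Matrix.mul_assoc C P₂ Cᴴ]
    abel
  rw [main]
  abel
end

section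
/- Let H ∈ ℂ^{p×m} and J ∈ ℂ^{r×m} be complex matrices, let D₁ ∈ ℂ^{m×m}, D₂ ∈ ℂ^{p×p} be invertible matrices with D₁*D₁ = I + H*H and D₂D₂* = I + HH* (so that I + HH* is invertible), and set K₀ = JH*(I + HH*)⁻¹. Then [J − K₀H, −K₀] · [[D₁⁻¹, −H*(D₂*)⁻¹],[−HD₁⁻¹, −(D₂*)⁻¹]] = [JD₁⁻¹, 0]; in particular K₀D₂ = JH*(D₂*)⁻¹. -/
open Matrix

/-- pointwise form of `T_{K₀} θ = [JΔ₁⁻¹, 0]`.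
With `D₁*D₁ = I + H*H`, `D₂D₂* = I + HH*` (`D₁`, `D₂` invertible) and
`K₀ = JH*(I + HH*)⁻¹`, one has
`[J − K₀H, −K₀] · [[D₁⁻¹, −H*(D₂*)⁻¹],[−HD₁⁻¹, −(D₂*)⁻¹]] = [JD₁⁻¹, 0]`,
and in particular `K₀D₂ = JH*(D₂*)⁻¹`. -/
theorem TK0_theta_identity
    {p m r : ℕ}
    (H : Matrix (Fin p) (Fin m) ℂ) (J : Matrix (Fin r) (Fin m) ℂ)
    (D₁ : Matrix (Fin m) (Fin m) ℂ) (D₂ : Matrix (Fin p) (Fin p) ℂ)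
    (hD₁ : IsUnit D₁) (hD₂ : IsUnit D₂)
    (hfac₁ : D₁ᴴ * D₁ = 1 + Hᴴ * H) (hfac₂ : D₂ * D₂ᴴ = 1 + H * Hᴴ)
    (K₀ : Matrix (Fin r) (Fin p) ℂ)
    (hK₀ : K₀ = J * Hᴴ * ((1 : Matrix (Fin p) (Fin p) ℂ) + H * Hᴴ)⁻¹) :
    fromCols (J - K₀ * H) (-K₀) *
        fromBlocks D₁⁻¹ (-(Hᴴ * (D₂ᴴ)⁻¹)) (-(H * D₁⁻¹)) (-(D₂ᴴ)⁻¹)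
      = fromCols (J * D₁⁻¹) 0 ∧
    K₀ * D₂ = J * Hᴴ * (D₂ᴴ)⁻¹ := by
  have hD₂det : IsUnit D₂.det := (isUnit_iff_isUnit_det _).mp hD₂
  have hD2Hdet : IsUnit (D₂ᴴ).det := by
    rw [det_conjTranspose]; exact isUnit_star.mpr hD₂det
  have hD2H : IsUnit (D₂ᴴ) := (isUnit_iff_isUnit_det _).mpr hD2Hdet
  have hS : IsUnit ((1 : Matrix (Fin p) (Fin p) ℂ) + H * Hᴴ) := by
    rw [← hfac₂]; exact hD₂.mul hD2H
  have hSdet : IsUnit ((1 : Matrix (Fin p) (Fin p) ℂ) + H * Hᴴ).det :=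
    (isUnit_iff_isUnit_det _).mp hS
  have hKS : K₀ * ((1 : Matrix (Fin p) (Fin p) ℂ) + H * Hᴴ) = J * Hᴴ := by
    rw [hK₀, nonsing_inv_mul_cancel_right _ _ hSdet]
  have h2 : K₀ * D₂ = J * Hᴴ * (D₂ᴴ)⁻¹ := by
    have h3 : K₀ * (D₂ * D₂ᴴ) * (D₂ᴴ)⁻¹ = J * Hᴴ * (D₂ᴴ)⁻¹ := by
      rw [hfac₂, hKS]
    rw [← h3, ← Matrix.mul_assoc K₀ D₂ D₂ᴴ, Matrix.mul_assoc (K₀ * D₂),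
      mul_nonsing_inv _ hD2Hdet, Matrix.mul_one]
  refine ⟨?_, h2⟩
  rw [fromCols_mul_fromBlocks, fromCols_inj.eq_iff]
  have hKS' : K₀ + K₀ * (H * Hᴴ) = J * Hᴴ := by
    rw [← hKS, Matrix.mul_add, Matrix.mul_one]
  constructor
  · rw [Matrix.sub_mul, Matrix.neg_mul, Matrix.mul_neg, neg_neg,
      ← Matrix.mul_assoc K₀ H D₁⁻¹]
    abel
  · have key : J * (Hᴴ * (D₂ᴴ)⁻¹)
        = K₀ * (D₂ᴴ)⁻¹ + K₀ * H * (Hᴴ * (D₂ᴴ)⁻¹) := by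
      rw [← Matrix.mul_assoc J, ← hKS', Matrix.add_mul, Matrix.mul_assoc K₀ (H * Hᴴ),
        Matrix.mul_assoc H Hᴴ, ← Matrix.mul_assoc K₀ H]
    rw [Matrix.mul_neg, Matrix.neg_mul, Matrix.mul_neg, neg_neg, Matrix.sub_mul, key]
    abel
end

section
/- Let A₁ ∈ ℂ^{n×n}, B ∈ ℂ^{n×m}, L ∈ ℂ^{r×n} be complex matrices, let Σ ∈ ℂ^{m×m} be invertible, let γ > 0 be real, and let W₁ ∈ ℂ^{n×n} satisfy the Lyapunov equation γ⁻²BΣ⁻¹B* − W₁ + A₁W₁A₁* = 0. Then for every nonzero z ∈ ℂ such that zI − A₁ and z⁻¹I − A₁* are invertible: I + γ⁻²L(zI − A₁)⁻¹BΣ⁻¹B*(z⁻¹I − A₁*)⁻¹L* = (I + LW₁L*) + L(zI − A₁)⁻¹A₁W₁L* + LW₁A₁*(z⁻¹I − A₁*)⁻¹L*. -/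
open Matrix

/-- intermediate additive decomposition in the proof of Lemma 2.
If `W₁` solves the Lyapunov equation `γ⁻²BΣ⁻¹B* − W₁ + A₁W₁A₁* = 0`, then for every
nonzero `z` with `zI − A₁` and `z⁻¹I − A₁*` invertible,
`I + γ⁻²L(zI−A₁)⁻¹BΣ⁻¹B*(z⁻¹I−A₁*)⁻¹L*
  = (I + LW₁L*) + L(zI−A₁)⁻¹A₁W₁L* + LW₁A₁*(z⁻¹I−A₁*)⁻¹L*`. -/
theorem lyapunov_additive_decomposition
    {n m r : ℕ}
    (A₁ : Matrix (Fin n) (Fin n) ℂ) (B : Matrix (Fin n) (Fin m) ℂ)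
    (L : Matrix (Fin r) (Fin n) ℂ)
    (Sg : Matrix (Fin m) (Fin m) ℂ) (hSg : IsUnit Sg)
    (γ : ℝ) (hγ : 0 < γ)
    (W₁ : Matrix (Fin n) (Fin n) ℂ)
    (hW₁ : ((γ : ℂ) ^ 2)⁻¹ • (B * Sg⁻¹ * Bᴴ) - W₁ + A₁ * W₁ * A₁ᴴ = 0) :
    ∀ z : ℂ, z ≠ 0 →
      IsUnit (z • (1 : Matrix (Fin n) (Fin n) ℂ) - A₁) →
      IsUnit (z⁻¹ • (1 : Matrix (Fin n) (Fin n) ℂ) - A₁ᴴ) →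
      (1 : Matrix (Fin r) (Fin r) ℂ)
          + ((γ : ℂ) ^ 2)⁻¹ • (L * (z • (1 : Matrix (Fin n) (Fin n) ℂ) - A₁)⁻¹ * B * Sg⁻¹ *
              Bᴴ * (z⁻¹ • (1 : Matrix (Fin n) (Fin n) ℂ) - A₁ᴴ)⁻¹ * Lᴴ)
        = ((1 : Matrix (Fin r) (Fin r) ℂ) + L * W₁ * Lᴴ)
            + L * (z • (1 : Matrix (Fin n) (Fin n) ℂ) - A₁)⁻¹ * (A₁ * W₁ * Lᴴ)
            + L * W₁ * A₁ᴴ * (z⁻¹ • (1 : Matrix (Fin n) (Fin n) ℂ) - A₁ᴴ)⁻¹ * Lᴴ := by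
  intro z hz hX hY
  set X := z • (1 : Matrix (Fin n) (Fin n) ℂ) - A₁ with hXdef
  set Y := z⁻¹ • (1 : Matrix (Fin n) (Fin n) ℂ) - A₁ᴴ with hYdef
  have hXd : IsUnit X.det := (Matrix.isUnit_iff_isUnit_det _).mp hX
  have hYd : IsUnit Y.det := (Matrix.isUnit_iff_isUnit_det _).mp hY
  have hS : ((γ : ℂ) ^ 2)⁻¹ • (B * Sg⁻¹ * Bᴴ) = W₁ - A₁ * W₁ * A₁ᴴ := by
    have h : ((γ : ℂ) ^ 2)⁻¹ • (B * Sg⁻¹ * Bᴴ) - (W₁ - A₁ * W₁ * A₁ᴴ)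
        = ((γ : ℂ) ^ 2)⁻¹ • (B * Sg⁻¹ * Bᴴ) - W₁ + A₁ * W₁ * A₁ᴴ := by abel
    rw [← sub_eq_zero, h, hW₁]
  have hexp : X * W₁ * Y + A₁ * W₁ * Y + X * (W₁ * A₁ᴴ) = W₁ - A₁ * W₁ * A₁ᴴ := by
    have hz1 : z • z⁻¹ • W₁ = W₁ := by
      rw [smul_smul, mul_inv_cancel₀ hz, one_smul]
    simp only [hXdef, hYdef, Matrix.sub_mul, Matrix.mul_sub, Matrix.smul_mul,
      Matrix.mul_smul, Matrix.one_mul, Matrix.mul_one, hz1, Matrix.mul_assoc]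
    simp only [smul_sub, smul_smul, inv_mul_cancel₀ hz, one_smul]
    abel
  have key : X⁻¹ * (W₁ - A₁ * W₁ * A₁ᴴ) * Y⁻¹
      = W₁ + X⁻¹ * (A₁ * W₁) + W₁ * A₁ᴴ * Y⁻¹ := by
    rw [← hexp]
    simp only [Matrix.mul_add, Matrix.add_mul]
    rw [show X⁻¹ * (X * W₁ * Y) * Y⁻¹ = (X⁻¹ * X) * W₁ * (Y * Y⁻¹) from by
      simp only [Matrix.mul_assoc],
      show X⁻¹ * (A₁ * W₁ * Y) * Y⁻¹ = X⁻¹ * (A₁ * W₁) * (Y * Y⁻¹) from by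
      simp only [Matrix.mul_assoc],
      show X⁻¹ * (X * (W₁ * A₁ᴴ)) * Y⁻¹ = (X⁻¹ * X) * (W₁ * A₁ᴴ) * Y⁻¹ from by
      simp only [Matrix.mul_assoc],
      Matrix.nonsing_inv_mul _ hXd, Matrix.mul_nonsing_inv _ hYd]
    simp [Matrix.mul_assoc]
  have lhs : ((γ : ℂ) ^ 2)⁻¹ • (L * X⁻¹ * B * Sg⁻¹ * Bᴴ * Y⁻¹ * Lᴴ)
      = L * (X⁻¹ * (((γ : ℂ) ^ 2)⁻¹ • (B * Sg⁻¹ * Bᴴ)) * Y⁻¹) * Lᴴ := by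
    simp only [Matrix.mul_smul, Matrix.smul_mul, Matrix.mul_assoc]
  rw [lhs, hS, key]
  simp only [Matrix.mul_add, Matrix.add_mul, Matrix.mul_assoc]
  abel
end

section
/- Let Â ∈ ℂ^{n×n}, N ∈ ℂ^{q×q}, G ∈ ℂ^{n×q}, L ∈ ℂ^{r×n}, C ∈ ℂ^{q×s} be complex matrices and let W ∈ ℂ^{n×q} satisfy the Sylvester equation G − W + ÂWN* = 0. Then for every nonzero z ∈ ℂ such that zI − Â and z⁻¹I − N* are invertible: L(zI − Â)⁻¹G(z⁻¹I − N*)⁻¹C = LWC + L(zI − Â)⁻¹ÂWC + LWN*(z⁻¹I − N*)⁻¹C. -/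
open Matrix

/-- the decomposition underlying Lemma 3. If `W` solves the Sylvester
equation `G − W + ÂWN* = 0`, then for every nonzero `z` with `zI − Â` and `z⁻¹I − N*`
invertible,
`L(zI−Â)⁻¹G(z⁻¹I−N*)⁻¹C = LWC + L(zI−Â)⁻¹ÂWC + LWN*(z⁻¹I−N*)⁻¹C`. -/
theorem sylvester_decomposition
    {n q r s : ℕ}
    (Ahat : Matrix (Fin n) (Fin n) ℂ) (N : Matrix (Fin q) (Fin q) ℂ)
    (G : Matrix (Fin n) (Fin q) ℂ) (L : Matrix (Fin r) (Fin n) ℂ)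
    (C : Matrix (Fin q) (Fin s) ℂ)
    (W : Matrix (Fin n) (Fin q) ℂ)
    (hW : G - W + Ahat * W * Nᴴ = 0) :
    ∀ z : ℂ, z ≠ 0 →
      IsUnit (z • (1 : Matrix (Fin n) (Fin n) ℂ) - Ahat) →
      IsUnit (z⁻¹ • (1 : Matrix (Fin q) (Fin q) ℂ) - Nᴴ) →
      L * (z • (1 : Matrix (Fin n) (Fin n) ℂ) - Ahat)⁻¹ * G *
          (z⁻¹ • (1 : Matrix (Fin q) (Fin q) ℂ) - Nᴴ)⁻¹ * C
        = L * W * C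
            + L * (z • (1 : Matrix (Fin n) (Fin n) ℂ) - Ahat)⁻¹ * (Ahat * W * C)
            + L * W * Nᴴ * (z⁻¹ • (1 : Matrix (Fin q) (Fin q) ℂ) - Nᴴ)⁻¹ * C := by
  intro z hz hP hQ
  set P : Matrix (Fin n) (Fin n) ℂ := z • (1 : Matrix (Fin n) (Fin n) ℂ) - Ahat with hPdef
  set Q : Matrix (Fin q) (Fin q) ℂ := z⁻¹ • (1 : Matrix (Fin q) (Fin q) ℂ) - Nᴴ with hQdef
  have hPd : IsUnit P.det := (Matrix.isUnit_iff_isUnit_det P).mp hP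
  have hQd : IsUnit Q.det := (Matrix.isUnit_iff_isUnit_det Q).mp hQ
  have hPi : P * P⁻¹ = 1 := Matrix.mul_nonsing_inv P hPd
  have hPi' : P⁻¹ * P = 1 := Matrix.nonsing_inv_mul P hPd
  have hQi : Q⁻¹ * Q = 1 := Matrix.nonsing_inv_mul Q hQd
  have hQi' : Q * Q⁻¹ = 1 := Matrix.mul_nonsing_inv Q hQd
  have hG : G = W - Ahat * W * Nᴴ := by
    have h : G + Ahat * W * Nᴴ - W = 0 := by rw [← hW]; abel
    rw [sub_eq_zero] at h
    rw [eq_sub_iff_add_eq]; exact h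
  have key : P⁻¹ * G * Q⁻¹ = W + P⁻¹ * (Ahat * W) + W * Nᴴ * Q⁻¹ := by
    have expand : P * (W + P⁻¹ * (Ahat * W) + W * Nᴴ * Q⁻¹) * Q = G := by
      have e1 : P * (P⁻¹ * (Ahat * W)) = Ahat * W := by
        rw [← Matrix.mul_assoc, hPi, Matrix.one_mul]
      have e2 : W * Nᴴ * Q⁻¹ * Q = W * Nᴴ := by
        rw [Matrix.mul_assoc, hQi, Matrix.mul_one]
      calc P * (W + P⁻¹ * (Ahat * W) + W * Nᴴ * Q⁻¹) * Q
          = P * W * Q + P * (P⁻¹ * (Ahat * W)) * Q + P * (W * Nᴴ * Q⁻¹ * Q) := by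
            simp only [Matrix.mul_add, Matrix.add_mul, Matrix.mul_assoc]
        _ = P * W * Q + Ahat * W * Q + P * (W * Nᴴ) := by rw [e1, e2]
        _ = G := by
            rw [hPdef, hQdef, hG]
            simp only [Matrix.sub_mul, Matrix.mul_sub, Matrix.smul_mul, Matrix.mul_smul,
              smul_sub, smul_add, smul_smul, Matrix.one_mul, Matrix.mul_one,
              mul_inv_cancel₀ hz, inv_mul_cancel₀ hz, one_smul, Matrix.mul_assoc]
            abel
    calc P⁻¹ * G * Q⁻¹ = P⁻¹ * (P * (W + P⁻¹ * (Ahat * W) + W * Nᴴ * Q⁻¹) * Q) * Q⁻¹ := by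
          rw [expand]
      _ = W + P⁻¹ * (Ahat * W) + W * Nᴴ * Q⁻¹ := by
          rw [Matrix.mul_assoc P, ← Matrix.mul_assoc P⁻¹, hPi', Matrix.one_mul,
            Matrix.mul_assoc, hQi', Matrix.mul_one]
  calc L * P⁻¹ * G * Q⁻¹ * C = L * (P⁻¹ * G * Q⁻¹) * C := by
        simp only [Matrix.mul_assoc]
    _ = L * (W + P⁻¹ * (Ahat * W) + W * Nᴴ * Q⁻¹) * C := by rw [key]
    _ = L * W * C + L * P⁻¹ * (Ahat * W * C) + L * W * Nᴴ * Q⁻¹ * C := by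
        simp only [Matrix.mul_add, Matrix.add_mul, Matrix.mul_assoc]
end

section
/- Let Ã ∈ ℂ^{n×n}, B̃ ∈ ℂ^{n×m}, L̃ ∈ ℂ^{r×n}, S̃ ∈ ℂ^{n×m} be complex matrices and γ > 0 real. Let P₂ ∈ ℂ^{n×n} be Hermitian, set Σ₂ = γ²I + B̃*P₂B̃, assume Σ₂ is invertible, set K₂ = Σ₂⁻¹(S̃* + B̃*P₂Ã), and assume the Riccati equation L̃*L̃ − P₂ + Ã*P₂Ã − K₂*Σ₂K₂ = 0 holds. Then for every nonzero z ∈ ℂ such that zI − Ã and z⁻¹I − Ã* are invertible: γ²I + B̃*(z⁻¹I − Ã*)⁻¹L̃*L̃(zI − Ã)⁻¹B̃ + B̃*(z⁻¹I − Ã*)⁻¹S̃ + S̃*(zI − Ã)⁻¹B̃ = (I + B̃*(z⁻¹I − Ã*)⁻¹K₂*) Σ₂ (I + K₂(zI − Ã)⁻¹B̃). -/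
open Matrix

/-- spectral factorization with cross term, used in Theorem 3.
With `Σ₂ = γ²I + B̃*P₂B̃` invertible, `K₂ = Σ₂⁻¹(S̃* + B̃*P₂Ã)` and the Riccati equation
`L̃*L̃ − P₂ + Ã*P₂Ã − K₂*Σ₂K₂ = 0`, for every nonzero `z` with `zI − Ã` and `z⁻¹I − Ã*`
invertible,
`γ²I + B̃*(z⁻¹I−Ã*)⁻¹L̃*L̃(zI−Ã)⁻¹B̃ + B̃*(z⁻¹I−Ã*)⁻¹S̃ + S̃*(zI−Ã)⁻¹B̃
  = (I + B̃*(z⁻¹I−Ã*)⁻¹K₂*) Σ₂ (I + K₂(zI−Ã)⁻¹B̃)`. -/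
theorem spectral_factorization_cross_term
    {n m r : ℕ}
    (At : Matrix (Fin n) (Fin n) ℂ) (Bt : Matrix (Fin n) (Fin m) ℂ)
    (Lt : Matrix (Fin r) (Fin n) ℂ) (St : Matrix (Fin n) (Fin m) ℂ)
    (γ : ℝ) (hγ : 0 < γ)
    (P₂ : Matrix (Fin n) (Fin n) ℂ) (hP₂ : P₂.IsHermitian)
    (Sg₂ : Matrix (Fin m) (Fin m) ℂ)
    (hSg₂ : Sg₂ = ((γ : ℂ) ^ 2) • (1 : Matrix (Fin m) (Fin m) ℂ) + Btᴴ * P₂ * Bt)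
    (hSg₂inv : IsUnit Sg₂)
    (K₂ : Matrix (Fin m) (Fin n) ℂ)
    (hK₂ : K₂ = Sg₂⁻¹ * (Stᴴ + Btᴴ * P₂ * At))
    (hRiccati : Ltᴴ * Lt - P₂ + Atᴴ * P₂ * At - K₂ᴴ * Sg₂ * K₂ = 0) :
    ∀ z : ℂ, z ≠ 0 →
      IsUnit (z • (1 : Matrix (Fin n) (Fin n) ℂ) - At) →
      IsUnit (z⁻¹ • (1 : Matrix (Fin n) (Fin n) ℂ) - Atᴴ) →
      ((γ : ℂ) ^ 2) • (1 : Matrix (Fin m) (Fin m) ℂ)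
          + Btᴴ * (z⁻¹ • (1 : Matrix (Fin n) (Fin n) ℂ) - Atᴴ)⁻¹ * (Ltᴴ * Lt) *
              (z • (1 : Matrix (Fin n) (Fin n) ℂ) - At)⁻¹ * Bt
          + Btᴴ * (z⁻¹ • (1 : Matrix (Fin n) (Fin n) ℂ) - Atᴴ)⁻¹ * St
          + Stᴴ * (z • (1 : Matrix (Fin n) (Fin n) ℂ) - At)⁻¹ * Bt
        = ((1 : Matrix (Fin m) (Fin m) ℂ)
              + Btᴴ * (z⁻¹ • (1 : Matrix (Fin n) (Fin n) ℂ) - Atᴴ)⁻¹ * K₂ᴴ) * Sg₂ *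
            ((1 : Matrix (Fin m) (Fin m) ℂ)
              + K₂ * (z • (1 : Matrix (Fin n) (Fin n) ℂ) - At)⁻¹ * Bt) := by
  intro z hz hMu hNu
  set M := z • (1 : Matrix (Fin n) (Fin n) ℂ) - At with hMdef
  set N := z⁻¹ • (1 : Matrix (Fin n) (Fin n) ℂ) - Atᴴ with hNdef
  have hMd : IsUnit M.det := (Matrix.isUnit_iff_isUnit_det M).1 hMu
  have hNd : IsUnit N.det := (Matrix.isUnit_iff_isUnit_det N).1 hNu
  have hSd : IsUnit Sg₂.det := (Matrix.isUnit_iff_isUnit_det Sg₂).1 hSg₂inv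
  have hSgH : Sg₂ᴴ = Sg₂ := by
    rw [hSg₂]
    simp [Matrix.conjTranspose_add, Matrix.conjTranspose_smul, Matrix.conjTranspose_mul,
      hP₂.eq, Matrix.mul_assoc, Complex.star_def, map_pow, Complex.conj_ofReal]
  have hSK : Sg₂ * K₂ = Stᴴ + Btᴴ * P₂ * At := by
    rw [hK₂, ← Matrix.mul_assoc, Matrix.mul_nonsing_inv _ hSd, Matrix.one_mul]
  have hKS : K₂ᴴ * Sg₂ = St + Atᴴ * P₂ * Bt := by
    rw [hK₂, Matrix.conjTranspose_mul, Matrix.conjTranspose_nonsing_inv, hSgH,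
      Matrix.mul_assoc, Matrix.nonsing_inv_mul _ hSd, Matrix.mul_one]
    simp [Matrix.conjTranspose_add, Matrix.conjTranspose_mul, hP₂.eq, Matrix.mul_assoc]
  have hKSK : K₂ᴴ * Sg₂ * K₂ = Ltᴴ * Lt - P₂ + Atᴴ * P₂ * At :=
    (sub_eq_zero.mp hRiccati).symm
  have h0 : N * P₂ * M + Atᴴ * P₂ * M + N * (P₂ * At) + (Atᴴ * P₂ * At - P₂) = 0 := by
    rw [hMdef, hNdef]
    simp only [Matrix.sub_mul, Matrix.mul_sub, Matrix.smul_mul, Matrix.mul_smul,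
      Matrix.one_mul, Matrix.mul_one, smul_smul, smul_sub, smul_add,
      inv_mul_cancel₀ hz, mul_inv_cancel₀ hz, one_smul, Matrix.mul_assoc]
    abel
  have hM1 : M * M⁻¹ = 1 := Matrix.mul_nonsing_inv M hMd
  have hN2 : N⁻¹ * N = 1 := Matrix.nonsing_inv_mul N hNd
  set X := M⁻¹ with hXdef
  set Y := N⁻¹ with hYdef
  clear_value X Y
  have h1 : P₂ + Y * (Atᴴ * P₂) + P₂ * At * X + Y * (Atᴴ * P₂ * At - P₂) * X = 0 := by
    have e := congrArg (fun Q => Y * Q * X) h0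
    simp only [Matrix.mul_zero, Matrix.zero_mul, Matrix.mul_add, Matrix.add_mul,
      Matrix.mul_assoc, hM1, Matrix.mul_one] at e
    simp only [← Matrix.mul_assoc, hN2, Matrix.one_mul] at e
    rw [← e]
    noncomm_ring
  have h2 : -(Btᴴ * (P₂ + Y * (Atᴴ * P₂) + P₂ * At * X
      + Y * (Atᴴ * P₂ * At - P₂) * X) * Bt) = 0 := by
    rw [h1]; simp
  clear_value M N
  rw [show ((1 : Matrix (Fin m) (Fin m) ℂ) + Btᴴ * Y * K₂ᴴ) * Sg₂ *
      ((1 : Matrix (Fin m) (Fin m) ℂ) + K₂ * X * Bt)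
      = Sg₂ + Btᴴ * Y * (K₂ᴴ * Sg₂) + (Sg₂ * K₂) * (X * Bt)
        + Btᴴ * Y * (K₂ᴴ * Sg₂ * K₂) * (X * Bt) from by
      simp only [Matrix.mul_add, Matrix.add_mul, Matrix.one_mul, Matrix.mul_one,
        Matrix.mul_assoc]
      abel]
  rw [hKSK, hKS, hSK, hSg₂, ← sub_eq_zero, ← h2]
  simp only [Matrix.mul_add, Matrix.add_mul, Matrix.mul_sub, Matrix.sub_mul,
    Matrix.mul_assoc, Matrix.mul_one, Matrix.one_mul]
  abel
end
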